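/- Let n be a natural number with n ≡ 1 (mod 4). Then n belongs to B if and only if the number of pairs (a,b) of nonnegative integers with n = a² + 4b² is odd. -/

import Mathlib

open PowerSeries

/-- `g = ∑_{n ≥ 0} x^{n²}` in `(ℤ/2ℤ)[[x]]`: the coefficient of `x^m` is `1`
exactly when `m` is a perfect square. -/
noncomputable def g : PowerSeries (ZMod 2) :=
  PowerSeries.mk fun m => if IsSquare m then 1 else 0

/-- `B` is the set of `n` for which the coefficient of `x^n` in `1/g` equals `1`. -/
noncomputable def B : Set ℕ := {n | PowerSeries.coeff (R := ZMod 2) n g⁻¹ = 1}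

/-!
Write `h = 1/g`. Over `𝔽₂` squaring is `f(x) ↦ f(x²)`, so `h = g h² = g(x) h(x²)`.
Since `2m` is a square exactly when `m = 2k²`, the even part of `g` is `g(x²)`, and taking
even parts of `h = g(x) h(x²)` shows that the even part of `h` is `g(x²) h(x) = g(x)`.
Hence `h(x²)` and `g(x⁴)` agree in every degree `≢ 2 (mod 4)`. For `n ≡ 1 (mod 4)` and a
square `a²`, `n - a² ≢ 2 (mod 4)`, so `[xⁿ] h = [xⁿ] g(x) g(x⁴)`, which is the number of
solutions of `n = a² + 4b²` reduced mod 2.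
-/

open Finset

namespace PowerSeries

variable {R : Type*} [CommRing R]

noncomputable def evenPart (f : R⟦X⟧) : R⟦X⟧ := mk fun k => coeff (2 * k) f

@[simp]
theorem coeff_evenPart (f : R⟦X⟧) (k : ℕ) : coeff k (evenPart f) = coeff (2 * k) f := by
  simp [evenPart]

theorem evenPart_mul_expand_two (f q : R⟦X⟧) :
    evenPart (f * expand 2 two_ne_zero q) = evenPart f * q := by
  ext k
  set double : ℕ × ℕ → ℕ × ℕ := fun p => (2 * p.1, 2 * p.2)
  have hdouble : Set.InjOn double (antidiagonal k) := fun p _ p' _ h => by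
    simp_all [double, Prod.ext_iff]
  have hsub : (antidiagonal k).image double ⊆ antidiagonal (2 * k) := by
    simp only [subset_iff, mem_image, HasAntidiagonal.mem_antidiagonal, forall_exists_index,
      and_imp]
    rintro _ p hp rfl
    simp only [double]; omega
  rw [coeff_evenPart, coeff_mul, coeff_mul, ← sum_subset hsub, sum_image hdouble]
  · simp [double]
  · intro p hp hp'
    have hodd : ¬ 2 ∣ p.2 := by
      rintro ⟨b, hb⟩
      refine hp' (mem_image.2 ⟨(p.1 / 2, b), ?_, ?_⟩) <;>
        simp_all [double, Prod.ext_iff] <;> omega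
    rw [coeff_expand_of_not_dvd _ _ _ hodd, mul_zero]

theorem pow_char_eq_expand {p : ℕ} [Fact p.Prime] (f : (ZMod p)⟦X⟧) :
    f ^ p = expand p (Fact.out : p.Prime).ne_zero f := by
  rw [← MvPowerSeries.map_frobenius_expand p (Fact.out : p.Prime).ne_zero, ZMod.frobenius_zmod]
  rfl

end PowerSeries

theorem Nat.isSquare_two_mul_iff {k : ℕ} : IsSquare (2 * k) ↔ 2 ∣ k ∧ IsSquare (k / 2) := by
  constructor
  · rintro ⟨r, hr⟩
    obtain ⟨s, rfl⟩ : 2 ∣ r := (Nat.prime_two.dvd_mul.1 (hr ▸ dvd_mul_right 2 k)).elim id id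
    refine ⟨⟨s * s, by linarith⟩, s, by rw [show k = 2 * (s * s) by linarith]; simp⟩
  · rintro ⟨⟨m, rfl⟩, s, hs⟩
    exact ⟨2 * s, by rw [Nat.mul_div_cancel_left _ two_pos] at hs; rw [hs]; ring⟩

theorem Nat.isSquare_mod_four {i : ℕ} (h : IsSquare i) : i % 4 = 0 ∨ i % 4 = 1 := by
  obtain ⟨r, rfl⟩ := h
  rcases Nat.even_or_odd' r with ⟨s, rfl | rfl⟩ <;> ring_nf <;> omega

@[simp]
theorem coeff_g (m : ℕ) : coeff m g = if IsSquare m then 1 else 0 := by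
  simp [g]

theorem g_mul_inv_g : g * g⁻¹ = 1 :=
  PowerSeries.mul_inv_cancel _ (by simp [← coeff_zero_eq_constantCoeff])

theorem evenPart_g : evenPart g = expand 2 two_ne_zero g := by
  ext k
  simp [coeff_expand, Nat.isSquare_two_mul_iff, ite_and]

theorem inv_g_eq_g_mul_expand_two : g⁻¹ = g * expand 2 two_ne_zero g⁻¹ := by
  rw [← pow_char_eq_expand, sq, ← mul_assoc, g_mul_inv_g, one_mul]

theorem evenPart_inv_g : evenPart g⁻¹ = g := by
  conv_lhs => rw [inv_g_eq_g_mul_expand_two]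
  rw [evenPart_mul_expand_two, evenPart_g, ← pow_char_eq_expand, sq, mul_assoc, g_mul_inv_g,
    mul_one]

theorem coeff_expand_two_inv_g {j : ℕ} (hj : j % 4 ≠ 2) :
    coeff j (expand 2 two_ne_zero g⁻¹) = coeff j (expand 4 four_ne_zero g) := by
  by_cases h4 : 4 ∣ j
  · obtain ⟨k, rfl⟩ := h4
    rw [coeff_expand_mul, show 4 * k = 2 * (2 * k) by ring, coeff_expand_mul, ← coeff_evenPart,
      evenPart_inv_g]
  · rw [coeff_expand_of_not_dvd _ _ _ h4, coeff_expand_of_not_dvd _ _ _ (by omega)]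

theorem coeff_inv_g_of_mod_four_eq_one {n : ℕ} (hn : n % 4 = 1) :
    coeff n g⁻¹ = coeff n (g * expand 4 four_ne_zero g) := by
  rw [inv_g_eq_g_mul_expand_two, coeff_mul, coeff_mul]
  refine sum_congr rfl fun p hp => ?_
  rw [HasAntidiagonal.mem_antidiagonal] at hp
  by_cases hsq : IsSquare p.1
  · have := Nat.isSquare_mod_four hsq
    rw [coeff_expand_two_inv_g (by omega)]
  · simp [hsq]

theorem card_sq_add_four_mul_sq_eq (n : ℕ) :
    Nat.card {p : ℕ × ℕ // n = p.1 ^ 2 + 4 * p.2 ^ 2} =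
      #{q ∈ antidiagonal n | IsSquare q.1 ∧ 4 ∣ q.2 ∧ IsSquare (q.2 / 4)} := by
  rw [← Nat.card_eq_finsetCard]
  refine Nat.card_congr
    (Equiv.ofBijective (fun p => ⟨(p.1.1 ^ 2, 4 * p.1.2 ^ 2), ?_⟩) ⟨?_, ?_⟩)
  · simp only [mem_filter, HasAntidiagonal.mem_antidiagonal, p.2, true_and]
    exact ⟨⟨p.1.1, sq _⟩, dvd_mul_right _ _, ⟨p.1.2, by simp [sq]⟩⟩
  · rintro ⟨⟨a, b⟩, _⟩ ⟨⟨a', b'⟩, _⟩ h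
    simp only [Subtype.mk.injEq, Prod.mk.injEq, mul_right_inj' four_ne_zero] at h
    simp [Nat.pow_left_injective two_ne_zero h.1, Nat.pow_left_injective two_ne_zero h.2]
  · rintro ⟨⟨i, j⟩, hq⟩
    simp only [mem_filter, HasAntidiagonal.mem_antidiagonal] at hq
    obtain ⟨hsum, ⟨a, ha⟩, ⟨c, rfl⟩, ⟨b, hb⟩⟩ := hq
    rw [Nat.mul_div_cancel_left _ four_pos] at hb
    refine ⟨⟨(a, b), ?_⟩, ?_⟩ <;> simp_all [sq]

theorem coeff_g_mul_expand_four (n : ℕ) :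
    coeff n (g * expand 4 four_ne_zero g) =
      Nat.card {p : ℕ × ℕ // n = p.1 ^ 2 + 4 * p.2 ^ 2} := by
  rw [card_sq_add_four_mul_sq_eq, natCast_card_filter, coeff_mul]
  refine sum_congr rfl fun q _ => ?_
  simp only [coeff_g, coeff_expand, boole_mul, ite_and]

theorem stmt1 (n : ℕ) (hn : n % 4 = 1) :
    n ∈ B ↔ Odd (Nat.card {p : ℕ × ℕ // n = p.1 ^ 2 + 4 * p.2 ^ 2}) := by
  rw [B, Set.mem_ofPred_eq, coeff_inv_g_of_mod_four_eq_one hn, coeff_g_mul_expand_four,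
    ZMod.natCast_eq_one_iff_odd]
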